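/- Let u_T : ℝⁿ → ℝ be Lipschitz, set f(x) := u_T(x) − ⟨A⁻¹x, x⟩/(2T), and let f* be the concave envelope of f. Then the function u_T^* := S_T^+(S_T^- u_T) satisfies u_T^*(x) = f*(x) + ⟨A⁻¹x, x⟩/(2T) for all x ∈ ℝⁿ. -/

import Mathlib

/-!
Write `B = A⁻¹`, `f = u_T - ⟨Bx, x⟩/(2T)` and `f^♯(p) = sup_z [f z + ⟨p, z⟩]` (`supAddInner f p`). Expanding
`⟨B(z - y), z - y⟩` gives `(S_T^- u_T)(y) = f^♯(By/T) - ⟨By, y⟩/(2T)`, and expanding `⟨B(x - y), x - y⟩`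
then gives `(S_T^+ S_T^- u_T)(x) - ⟨Bx, x⟩/(2T) = inf_y [f^♯(By/T) - ⟨By/T, x⟩]`. As `y ↦ By/T` is onto, this
is `inf_p [f^♯(p) - ⟨p, x⟩]`, the infimum at `x` of the affine majorants of `f`. That infimum is the concave
envelope, because by Hahn–Banach every concave majorant of `f` is the infimum of the affine functions
above it. The suprema are finite since the Lipschitz function `u_T` grows linearly while `⟨Bz, z⟩`
grows quadratically.
-/


open scoped RealInnerProductSpace
open Filter

noncomputable section

/-- `n`-dimensional Euclidean space. -/
abbrev Euc (n : ℕ) := EuclideanSpace ℝ (Fin n)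

/-- A real-valued function on `ℝⁿ` is Lipschitz (with some constant). -/
def IsLip {n : ℕ} (f : Euc n → ℝ) : Prop := ∃ K : NNReal, LipschitzWith K f

/-- The quadratic form `q ↦ ⟨M q, q⟩` associated to a matrix `M`. -/
def quadA {n : ℕ} (M : Matrix (Fin n) (Fin n) ℝ) (q : Euc n) : ℝ :=
  ⟪(Matrix.toEuclideanLin M) q, q⟫

/-- The forward Hopf–Lax operator for the quadratic Hamiltonian `H(p) = ⟨A p, p⟩/2`:
`(S_T^+ g)(x) = inf_y [g(y) + ⟨A⁻¹(x-y), x-y⟩/(2T)]`. -/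
def SplusQ {n : ℕ} (T : ℝ) (A : Matrix (Fin n) (Fin n) ℝ) (g : Euc n → ℝ) (x : Euc n) : ℝ :=
  ⨅ y : Euc n, (g y + quadA A⁻¹ (x - y) / (2 * T))

/-- The backward operator for the quadratic Hamiltonian:
`(S_T^- g)(x) = sup_y [g(y) - ⟨A⁻¹(y-x), y-x⟩/(2T)]`. -/
def SminusQ {n : ℕ} (T : ℝ) (A : Matrix (Fin n) (Fin n) ℝ) (g : Euc n → ℝ) (x : Euc n) : ℝ :=
  ⨆ y : Euc n, (g y - quadA A⁻¹ (y - x) / (2 * T))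

/-- The concave envelope of `f`:
`f*(x) = inf { v(x) : v concave on ℝⁿ and v ≥ f everywhere }`. -/
def concaveEnvelope {n : ℕ} (f : Euc n → ℝ) (x : Euc n) : ℝ :=
  ⨅ v : {v : Euc n → ℝ // ConcaveOn ℝ Set.univ v ∧ ∀ y : Euc n, f y ≤ v y}, v.1 x

theorem exists_pos_mul_norm_sq_le {E : Type*} [NormedAddCommGroup E] [NormedSpace ℝ E]
    [FiniteDimensional ℝ E] {q : E → ℝ} (hq : Continuous q)
    (hsmul : ∀ (c : ℝ) (z : E), q (c • z) = c ^ 2 * q z) (hpos : ∀ z, z ≠ 0 → 0 < q z) :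
    ∃ m > 0, ∀ z, m * ‖z‖ ^ 2 ≤ q z := by
  have hq0 : q 0 = 0 := by simpa using hsmul 0 0
  rcases subsingleton_or_nontrivial E with _ | _
  · exact ⟨1, one_pos, fun z => by simp [Subsingleton.elim z 0, hq0]⟩
  obtain ⟨z₀, hz₀, hmin⟩ := (isCompact_sphere (0 : E) 1).exists_isMinOn
    (NormedSpace.sphere_nonempty.mpr zero_le_one) hq.continuousOn
  refine ⟨q z₀, hpos z₀ (ne_zero_of_mem_unit_sphere ⟨z₀, hz₀⟩), fun z => ?_⟩
  rcases eq_or_ne z 0 with rfl | hz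
  · simp [hq0]
  have hw : ‖z‖⁻¹ • z ∈ Metric.sphere (0 : E) 1 := by
    simp [norm_smul, inv_mul_cancel₀ (norm_ne_zero_iff.mpr hz)]
  calc q z₀ * ‖z‖ ^ 2 ≤ ‖z‖ ^ 2 * q (‖z‖⁻¹ • z) := by rw [mul_comm]; gcongr; exact hmin hw
    _ = q z := by rw [← hsmul, smul_smul, mul_inv_cancel₀ (norm_ne_zero_iff.mpr hz), one_smul]

theorem ConcaveOn.exists_le_add_inner_sub_of_lt {E : Type*} [NormedAddCommGroup E]
    [InnerProductSpace ℝ E] [FiniteDimensional ℝ E] {v : E → ℝ} (hv : ConcaveOn ℝ Set.univ v)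
    {x : E} {a : ℝ} (hva : v x < a) : ∃ p : E, ∀ z, v z ≤ a + ⟪p, z - x⟫ := by
  have hcont : LowerSemicontinuousOn (-v) Set.univ :=
    (hv.neg.continuousOn isOpen_univ).lowerSemicontinuousOn
  obtain ⟨l, c, hle, hx⟩ := hv.neg.exists_affine_le_of_lt (𝕜 := ℝ) (Set.mem_univ x)
    (neg_lt_neg hva) isClosed_univ hcont
  refine ⟨-(InnerProductSpace.toDual ℝ E).symm l, fun z => ?_⟩
  have hz := hle ⟨z, Set.mem_univ z⟩
  simp only [Set.domRestrict, Function.comp_apply, RCLike.re_to_real, Pi.add_apply,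
    Function.const_apply, Pi.neg_apply] at hz hx
  simp only [inner_neg_left, InnerProductSpace.toDual_symm_apply, map_sub]
  linarith

section quadA

variable {n : ℕ}

theorem continuous_quadA (B : Matrix (Fin n) (Fin n) ℝ) : Continuous (quadA B) :=
  (Matrix.toEuclideanLin B).continuous_of_finiteDimensional.inner continuous_id

theorem quadA_smul (B : Matrix (Fin n) (Fin n) ℝ) (c : ℝ) (z : Euc n) :
    quadA B (c • z) = c ^ 2 * quadA B z := by
  simp only [quadA, map_smul, real_inner_smul_left, real_inner_smul_right]
  ring

theorem quadA_pos {B : Matrix (Fin n) (Fin n) ℝ} (hB : B.PosDef) {z : Euc n} (hz : z ≠ 0) :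
    0 < quadA B z := by
  simpa [quadA, Matrix.toLpLin_apply, EuclideanSpace.inner_eq_star_dotProduct]
    using hB.dotProduct_mulVec_pos (x := WithLp.ofLp z) (by simpa using hz)

theorem Matrix.PosDef.exists_pos_mul_norm_sq_le_quadA {B : Matrix (Fin n) (Fin n) ℝ}
    (hB : B.PosDef) : ∃ m > 0, ∀ z, m * ‖z‖ ^ 2 ≤ quadA B z :=
  exists_pos_mul_norm_sq_le (continuous_quadA B) (quadA_smul B) fun _ => quadA_pos hB

theorem Matrix.PosDef.toEuclideanLin_surjective {B : Matrix (Fin n) (Fin n) ℝ} (hB : B.PosDef) :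
    Function.Surjective (Matrix.toEuclideanLin B) := by
  refine LinearMap.injective_iff_surjective.mp <| (injective_iff_map_eq_zero _).mpr fun z hz => ?_
  by_contra hz0
  simpa [quadA, hz] using quadA_pos hB hz0

theorem quadA_sub {B : Matrix (Fin n) (Fin n) ℝ} (hB : B.IsHermitian) (a b : Euc n) :
    quadA B (a - b) = quadA B a - 2 * ⟪Matrix.toEuclideanLin B b, a⟫ + quadA B b := by
  have hsymm : ⟪Matrix.toEuclideanLin B a, b⟫ = ⟪Matrix.toEuclideanLin B b, a⟫ := by
    rw [real_inner_comm, Matrix.isSymmetric_toEuclideanLin_iff.mpr hB b a]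
  simp only [quadA, map_sub, inner_sub_left, inner_sub_right]
  linarith

end quadA

section supAddInner

variable {E : Type*} [NormedAddCommGroup E] [InnerProductSpace ℝ E]

def supAddInner (f : E → ℝ) (p : E) : ℝ :=
  ⨆ z, f z + ⟪p, z⟫

theorem bddAbove_range_add_inner_of_le {f : E → ℝ} {a b c : ℝ} (hc : 0 < c)
    (hf : ∀ z, f z ≤ a + b * ‖z‖ - c * ‖z‖ ^ 2) (p : E) :
    BddAbove (Set.range fun z => f z + ⟪p, z⟫) := by
  refine ⟨a + (b + ‖p‖) ^ 2 / (4 * c), ?_⟩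
  rintro _ ⟨z, rfl⟩
  have hinner : ⟪p, z⟫ ≤ ‖p‖ * ‖z‖ := real_inner_le_norm p z
  have hsq : (b + ‖p‖) * ‖z‖ - c * ‖z‖ ^ 2 ≤ (b + ‖p‖) ^ 2 / (4 * c) := by
    rw [le_div_iff₀ (by positivity)]
    nlinarith [sq_nonneg (2 * c * ‖z‖ - (b + ‖p‖))]
  linarith [hf z]

theorem le_supAddInner_sub {f : E → ℝ} (hf : ∀ p, BddAbove (Set.range fun z => f z + ⟪p, z⟫))
    (p x : E) : f x ≤ supAddInner f p - ⟪p, x⟫ := by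
  linarith [show f x + ⟪p, x⟫ ≤ supAddInner f p from le_ciSup (hf p) x]

theorem bddBelow_range_supAddInner_sub {f : E → ℝ}
    (hf : ∀ p, BddAbove (Set.range fun z => f z + ⟪p, z⟫)) (x : E) :
    BddBelow (Set.range fun p => supAddInner f p - ⟪p, x⟫) :=
  ⟨f x, by rintro _ ⟨p, rfl⟩; exact le_supAddInner_sub hf p x⟩

theorem iInf_supAddInner_sub_le [FiniteDimensional ℝ E] {f v : E → ℝ}
    (hf : ∀ p, BddAbove (Set.range fun z => f z + ⟪p, z⟫)) (hv : ConcaveOn ℝ Set.univ v)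
    (hfv : ∀ y, f y ≤ v y) (x : E) : ⨅ p, (supAddInner f p - ⟪p, x⟫) ≤ v x := by
  refine le_of_forall_gt_imp_ge_of_dense fun a hva => ?_
  obtain ⟨p, hp⟩ := hv.exists_le_add_inner_sub_of_lt hva
  have hsup : supAddInner f (-p) ≤ a - ⟪p, x⟫ := ciSup_le fun z => by
    rw [inner_neg_left]
    linarith [hfv z, hp z, inner_sub_right (𝕜 := ℝ) p z x]
  calc ⨅ p, (supAddInner f p - ⟪p, x⟫) ≤ supAddInner f (-p) - ⟪-p, x⟫ :=
        ciInf_le (bddBelow_range_supAddInner_sub hf x) (-p)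
    _ ≤ a := by rw [inner_neg_left]; linarith

end supAddInner

section concaveEnvelope

variable {n : ℕ} {f : Euc n → ℝ}

theorem concaveEnvelope_le {v : Euc n → ℝ} (hv : ConcaveOn ℝ Set.univ v) (hfv : ∀ y, f y ≤ v y)
    (x : Euc n) : concaveEnvelope f x ≤ v x := by
  refine ciInf_le ⟨f x, ?_⟩ (⟨v, hv, hfv⟩ : {v // ConcaveOn ℝ Set.univ v ∧ ∀ y, f y ≤ v y})
  rintro _ ⟨w, rfl⟩
  exact w.2.2 x

theorem concaveEnvelope_eq_iInf_supAddInner_sub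
    (hf : ∀ p, BddAbove (Set.range fun z => f z + ⟪p, z⟫)) (x : Euc n) :
    concaveEnvelope f x = ⨅ p, (supAddInner f p - ⟪p, x⟫) := by
  have hmaj (p y : Euc n) : f y ≤ supAddInner f p - ⟪p, y⟫ := le_supAddInner_sub hf p y
  have haff (p : Euc n) : ConcaveOn ℝ Set.univ fun y => supAddInner f p - ⟪p, y⟫ :=
    (concaveOn_const _ convex_univ).sub ((innerₛₗ ℝ p).convexOn convex_univ)
  have : Nonempty {v : Euc n → ℝ // ConcaveOn ℝ Set.univ v ∧ ∀ y, f y ≤ v y} :=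
    ⟨⟨_, haff 0, hmaj 0⟩⟩
  exact le_antisymm (le_ciInf fun p => concaveEnvelope_le (haff p) (hmaj p) x)
    (le_ciInf fun v => iInf_supAddInner_sub_le hf v.2.1 v.2.2 x)

end concaveEnvelope

section HopfLax

variable {n : ℕ} {T : ℝ} {A : Matrix (Fin n) (Fin n) ℝ} {u : Euc n → ℝ}

theorem bddAbove_range_sub_quadA_add_inner {B : Matrix (Fin n) (Fin n) ℝ} (hB : B.PosDef)
    (hT : 0 < T) {K : NNReal} (hu : LipschitzWith K u) (p : Euc n) :
    BddAbove (Set.range fun z => u z - quadA B z / (2 * T) + ⟪p, z⟫) := by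
  obtain ⟨m, hm, hcoer⟩ := hB.exists_pos_mul_norm_sq_le_quadA
  refine bddAbove_range_add_inner_of_le (a := u 0) (b := K) (by positivity : 0 < m / (2 * T))
    (fun z => ?_) p
  have hquad : m / (2 * T) * ‖z‖ ^ 2 ≤ quadA B z / (2 * T) := by
    rw [div_mul_eq_mul_div]
    gcongr
    exact hcoer z
  have hlip := hu.le_add_mul z 0
  rw [dist_zero_right] at hlip
  linarith

theorem SminusQ_eq_supAddInner_sub (hA : A.IsHermitian)
    (hf : ∀ p, BddAbove (Set.range fun z => u z - quadA A⁻¹ z / (2 * T) + ⟪p, z⟫)) (y : Euc n) :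
    SminusQ T A u y = supAddInner (fun z => u z - quadA A⁻¹ z / (2 * T))
      (T⁻¹ • Matrix.toEuclideanLin A⁻¹ y) - quadA A⁻¹ y / (2 * T) := by
  rw [SminusQ, supAddInner, ciSup_sub (hf _)]
  congr 1 with z
  rw [quadA_sub hA.inv, real_inner_smul_left]
  ring

theorem SplusQ_SminusQ_eq (hA : A.PosDef) (hT : T ≠ 0)
    (hf : ∀ p, BddAbove (Set.range fun z => u z - quadA A⁻¹ z / (2 * T) + ⟪p, z⟫)) (x : Euc n) :
    SplusQ T A (SminusQ T A u) x =
      (⨅ p, (supAddInner (fun z => u z - quadA A⁻¹ z / (2 * T)) p - ⟪p, x⟫)) +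
        quadA A⁻¹ x / (2 * T) := by
  have he : Function.Surjective fun y => T⁻¹ • Matrix.toEuclideanLin A⁻¹ y := by
    intro p
    obtain ⟨y, hy⟩ := hA.inv.toEuclideanLin_surjective (T • p)
    exact ⟨y, by simp [hy, hT]⟩
  rw [ciInf_add (bddBelow_range_supAddInner_sub hf x), ← he.iInf_comp, SplusQ]
  congr 1 with y
  rw [SminusQ_eq_supAddInner_sub hA.1 hf, quadA_sub hA.inv.1 x y, real_inner_smul_left]
  ring

end HopfLax

theorem semiconcave_envelope_eq_concave_envelope
    {n : ℕ} (T : ℝ) (hT : 0 < T)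
    (A : Matrix (Fin n) (Fin n) ℝ) (hA : A.PosDef)
    (uT : Euc n → ℝ) (huT : IsLip uT) :
    ∀ x : Euc n,
      SplusQ T A (SminusQ T A uT) x =
        concaveEnvelope (fun y => uT y - quadA A⁻¹ y / (2 * T)) x +
          quadA A⁻¹ x / (2 * T) := by
  intro x
  obtain ⟨K, hK⟩ := huT
  have hf := bddAbove_range_sub_quadA_add_inner hA.inv hT hK
  rw [SplusQ_SminusQ_eq hA hT.ne' hf, concaveEnvelope_eq_iInf_supAddInner_sub hf]
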